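/- arXiv:1506.08204 — 2 statements merged into one kernel-verified Lean document; each statement's English description precedes it below -/
import Mathlib

section
/- Let M be an SDDM matrix with indices partitioned into blocks F and C, and let M_{FF} = X_{FF} + L_{FF} be the unique decomposition with X_{FF} a nonnegative diagonal matrix and L_{FF} a Laplacian. Assume X_{FF} has positive diagonal entries and L_{FF} ⪯ β·X_{FF} for some 0 ≤ β ≤ 1/2. Let k be an odd positive integer and Z^{(k)}_{FF} = Σ_{i=0}^{k} X_{FF}^{−1}·(−L_{FF}·X_{FF}^{−1})^{i}. Then M ⪯ M̂ ⪯ (1 + 2β^{k})·M, where M̂ is the matrix obtained from M by replacing its FF block with (Z^{(k)}_{FF})^{−1}. -/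
open Matrix BigOperators Finset
open scoped Classical

noncomputable section

/-- Loewner order: `PSDLE A B` means `A ⪯ B`, i.e. `B - A` is positive semidefinite. -/
def PSDLE {n : Type*} [Fintype n] (A B : Matrix n n ℝ) : Prop :=
  (B - A).PosSemidef

/-- `ApproxEps A ε B` means `A ≈_ε B`, i.e. `e^ε • B ⪰ A ⪰ e^{-ε} • B`. -/
def ApproxEps {n : Type*} [Fintype n] (A : Matrix n n ℝ) (ε : ℝ) (B : Matrix n n ℝ) : Prop :=
  PSDLE A (Real.exp ε • B) ∧ PSDLE (Real.exp (-ε) • B) A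

/-- `M` is α-strongly diagonally dominant:
`M_{ii} ≥ (1+α)·Σ_{j≠i} |M_{ij}|` for every `i`. -/
def IsStronglyDD {n : Type*} [Fintype n] [DecidableEq n] (α : ℝ) (M : Matrix n n ℝ) : Prop :=
  ∀ i, (1 + α) * ∑ j ∈ Finset.univ.erase i, |M i j| ≤ M i i

/-- A Laplacian matrix: symmetric, nonpositive off-diagonal entries, zero row sums. -/
def IsLaplacian {n : Type*} [Fintype n] (L : Matrix n n ℝ) : Prop :=
  L.IsSymm ∧ (∀ i j, i ≠ j → L i j ≤ 0) ∧ ∀ i, ∑ j, L i j = 0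

/-- An SDDM matrix: symmetric positive definite, nonpositive off-diagonal entries,
and each diagonal entry at least the sum of absolute values of the off-diagonal
entries in its row. -/
def IsSDDM {n : Type*} [Fintype n] [DecidableEq n] (M : Matrix n n ℝ) : Prop :=
  M.IsSymm ∧ M.PosDef ∧ (∀ i j, i ≠ j → M i j ≤ 0) ∧
    ∀ i, ∑ j ∈ Finset.univ.erase i, |M i j| ≤ M i i

/-!
Write `X = R²` with `R = X^{1/2}` and `Y = R⁻¹ L R⁻¹`, so that `0 ⪯ Y ⪯ β` and
`Z = R⁻¹ (∑_{i ≤ k} (-Y)^i) R⁻¹`. For odd `k` the scalar geometric sum is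
`s(y) = (1 - y^{k+1}) / (1 + y)`, and `1 + y ≤ 1/s(y) ≤ 1 + y + 2β^k y` on `[0, β]`.
The functional calculus turns this into `X + L ⪯ Z⁻¹ ⪯ X + L + 2β^k L`. Replacing the `FF` block
is monotone, and `2β^k L` is absorbed into `2β^k M` because `M - L` (with `L` padded by zeros)
is again symmetric with nonpositive off-diagonal entries and nonnegative row sums,
hence positive semidefinite by Gershgorin.
-/

open scoped MatrixOrder

theorem Matrix.PosSemidef.of_offDiag_nonpos_of_sum_nonneg {n : Type*} [Fintype n]
    [DecidableEq n] {A : Matrix n n ℝ} (hA : A.IsSymm) (hoff : ∀ i j, i ≠ j → A i j ≤ 0)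
    (hrow : ∀ i, 0 ≤ ∑ j, A i j) : A.PosSemidef := by
  refine posSemidef_iff_isHermitian_and_spectrum_nonneg.2
    ⟨isHermitian_iff_isSymm.2 hA, fun μ hμ => ?_⟩
  rw [← spectrum_toLin', ← Module.End.hasEigenvalue_iff_mem_spectrum] at hμ
  obtain ⟨i, hi⟩ := eigenvalue_mem_ball hμ
  have habs : ∑ j ∈ univ.erase i, ‖A i j‖ = A i i - ∑ j, A i j := by
    simp only [Real.norm_eq_abs]
    rw [sum_congr rfl fun j hj => abs_of_nonpos (hoff i j (ne_of_mem_erase hj).symm),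
      sum_neg_distrib, ← add_sum_erase _ _ (mem_univ i)]
    ring
  rw [Metric.mem_closedBall, Real.dist_eq, habs] at hi
  show 0 ≤ μ
  linarith [neg_abs_le (μ - A i i), hrow i]

theorem IsSDDM.sum_row_nonneg {n : Type*} [Fintype n] [DecidableEq n] {M : Matrix n n ℝ}
    (hM : IsSDDM M) (i : n) : 0 ≤ ∑ j, M i j := by
  obtain ⟨-, -, -, hdom⟩ := hM
  have hle : ∀ j ∈ univ.erase i, -|M i j| ≤ M i j := fun j _ => neg_abs_le _
  rw [← add_sum_erase _ _ (mem_univ i)]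
  linarith [hdom i, sum_le_sum hle, sum_neg_distrib (s := univ.erase i) (f := fun j => |M i j|)]

namespace IsLaplacian

variable {n : Type*} [Fintype n] {L : Matrix n n ℝ}

theorem posSemidef [DecidableEq n] (hL : IsLaplacian L) : L.PosSemidef :=
  .of_offDiag_nonpos_of_sum_nonneg hL.1 hL.2.1 fun i => (hL.2.2 i).ge

theorem fromBlocks_zero {m : Type*} [Fintype m] (hL : IsLaplacian L) :
    IsLaplacian (fromBlocks L 0 0 0 : Matrix (n ⊕ m) (n ⊕ m) ℝ) := by
  obtain ⟨hsymm, hoff, hrow⟩ := hL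
  refine ⟨hsymm.fromBlocks (by simp) isSymm_zero, ?_, ?_⟩
  · rintro (i | i) (j | j) hij <;> simp only [fromBlocks_apply₁₁, fromBlocks_apply₁₂,
      fromBlocks_apply₂₁, fromBlocks_apply₂₂, Matrix.zero_apply, le_refl]
    exact hoff i j fun h => hij (congrArg Sum.inl h)
  · rintro (i | i) <;> simp [Fintype.sum_sum_type, hrow]

theorem le_of_offDiag_le [DecidableEq n] (hL : IsLaplacian L) {A : Matrix n n ℝ}
    (hA : A.IsSymm) (hrow : ∀ i, 0 ≤ ∑ j, A i j) (hoff : ∀ i j, i ≠ j → A i j ≤ L i j) :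
    L ≤ A := by
  refine PosSemidef.of_offDiag_nonpos_of_sum_nonneg (hA.sub hL.1)
    (fun i j hij => by simpa [sub_nonpos] using hoff i j hij) fun i => ?_
  simpa [sum_sub_distrib, hL.2.2 i] using hrow i

end IsLaplacian

theorem Matrix.PosSemidef.fromBlocks_zero {m n : Type*} [Fintype m] [Fintype n]
    {E : Matrix m m ℝ} (hE : E.PosSemidef) :
    (fromBlocks E 0 0 0 : Matrix (m ⊕ n) (m ⊕ n) ℝ).PosSemidef := by
  classical
  have h := hE.conjTranspose_mul_mul_same (fromCols (1 : Matrix m m ℝ) (0 : Matrix m n ℝ))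
  rw [conjTranspose_fromCols_eq_fromRows_conjTranspose, fromRows_mul, fromRows_mul_fromCols] at h
  simpa only [conjTranspose_one, conjTranspose_zero, one_mul, Matrix.zero_mul, Matrix.mul_one,
    Matrix.mul_zero] using h

theorem Matrix.fromBlocks_le_fromBlocks_left {m n : Type*} [Fintype m] [Fintype n]
    {A A' : Matrix m m ℝ} (h : A ≤ A') (B : Matrix m n ℝ) (C : Matrix n m ℝ)
    (D : Matrix n n ℝ) : fromBlocks A B C D ≤ fromBlocks A' B C D := by
  have hsub : fromBlocks A' B C D - fromBlocks A B C D = fromBlocks (A' - A) 0 0 0 := by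
    ext (i | i) (j | j) <;> simp
  rw [le_iff, hsub]
  exact (le_iff.1 h).fromBlocks_zero

theorem one_add_le_inv_geom_sum_neg {β y : ℝ} {k : ℕ} (hk : Odd k) (hy : 0 ≤ y) (hyβ : y ≤ β)
    (hβ : β ≤ 1 / 2) :
    1 + y ≤ (∑ i ∈ range (k + 1), (-y) ^ i)⁻¹ ∧
      (∑ i ∈ range (k + 1), (-y) ^ i)⁻¹ ≤ 1 + y + 2 * β ^ k * y := by
  have hsum : ∑ i ∈ range (k + 1), (-y) ^ i = (1 - y ^ (k + 1)) / (1 + y) := by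
    have h := geom_sum_mul (-y) (k + 1)
    rw [(Odd.add_one hk).neg_pow] at h
    field_simp
    linear_combination -h
  have hyk : y ^ (k + 1) ≤ β ^ k * y := by
    rw [pow_succ]
    exact mul_le_mul_of_nonneg_right (pow_le_pow_left₀ hy hyβ k) hy
  have hy2 : y ^ (k + 1) ≤ y ^ 2 :=
    pow_le_pow_of_le_one hy (by linarith) (by have := hk.pos; omega)
  have hyk0 : 0 ≤ y ^ (k + 1) := pow_nonneg hy _
  have hβk : 0 ≤ β ^ k * y := mul_nonneg (pow_nonneg (hy.trans hyβ) k) hy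
  have hden : 0 < 1 - y ^ (k + 1) := by nlinarith
  rw [hsum, inv_div, le_div_iff₀ hden, div_le_iff₀ hden]
  constructor
  · nlinarith
  · nlinarith [mul_le_mul_of_nonneg_left hyk (by linarith : (0 : ℝ) ≤ 1 + y),
      mul_le_mul_of_nonneg_left (by nlinarith : y ^ (k + 1) ≤ 1 / 4) hβk]

namespace Matrix

variable {n : Type*} [Fintype n] [DecidableEq n]

theorem geom_sum_neg_eq_cfc {Y : Matrix n n ℝ} (hY : IsSelfAdjoint Y) (k : ℕ) :
    ∑ i ∈ range k, (-Y) ^ i = cfc (fun y : ℝ => ∑ i ∈ range k, (-y) ^ i) Y := by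
  rw [← Finset.sum_fn, cfc_sum _ Y]
  refine sum_congr rfl fun i _ => ?_
  rw [cfc_pow (fun y : ℝ => -y) i Y, cfc_neg_id (a := Y)]

theorem one_add_le_inv_geom_sum_neg {Y : Matrix n n ℝ} {β : ℝ} {k : ℕ} (hk : Odd k)
    (hY : 0 ≤ Y) (hYβ : Y ≤ β • 1) (hβ : β ≤ 1 / 2) :
    1 + Y ≤ (∑ i ∈ range (k + 1), (-Y) ^ i)⁻¹ ∧
      (∑ i ∈ range (k + 1), (-Y) ^ i)⁻¹ ≤ 1 + Y + (2 * β ^ k) • Y := by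
  have hspec : ∀ y ∈ spectrum ℝ Y, 0 ≤ y ∧ y ≤ β := fun y hy =>
    ⟨spectrum_nonneg_of_nonneg hY hy, (le_algebraMap_iff_spectrum_le (R := ℝ)).1
      (by rwa [Algebra.algebraMap_eq_smul_one]) y hy⟩
  set g : ℝ → ℝ := fun y => ∑ i ∈ range (k + 1), (-y) ^ i
  have hbounds : ∀ y ∈ spectrum ℝ Y, 1 + y ≤ (g y)⁻¹ ∧ (g y)⁻¹ ≤ 1 + y + 2 * β ^ k * y :=
    fun y hy => _root_.one_add_le_inv_geom_sum_neg hk (hspec y hy).1 (hspec y hy).2 hβ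
  have hg : ∀ y ∈ spectrum ℝ Y, g y ≠ 0 := fun y hy =>
    (inv_pos.1 (by linarith [(hbounds y hy).1, (hspec y hy).1])).ne'
  have hinv : (∑ i ∈ range (k + 1), (-Y) ^ i)⁻¹ = cfc (fun y => (g y)⁻¹) Y := by
    rw [geom_sum_neg_eq_cfc (IsSelfAdjoint.of_nonneg hY), nonsing_inv_eq_ringInverse,
      cfc_inv g Y hg]
  have hlow : 1 + Y = cfc (fun y : ℝ => 1 + y) Y := by
    rw [cfc_add .., cfc_const_one .., cfc_id' ..]
  have hupp : 1 + Y + (2 * β ^ k) • Y = cfc (fun y : ℝ => 1 + y + 2 * β ^ k * y) Y := by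
    rw [cfc_add .., cfc_add .., cfc_const_one .., cfc_id' .., cfc_const_mul .., cfc_id' ..]
  have hcont : ContinuousOn (fun y => (g y)⁻¹) (spectrum ℝ Y) :=
    (by fun_prop : Continuous g).continuousOn.inv₀ hg
  rw [hinv, hupp, hlow]
  exact ⟨cfc_mono (fun y hy => (hbounds y hy).1) (hg := hcont),
    cfc_mono (fun y hy => (hbounds y hy).2) (hf := hcont)⟩

theorem add_le_inv_sum_mul_neg_mul_inv_pow {X L : Matrix n n ℝ} {β : ℝ} {k : ℕ} (hk : Odd k)
    (hX : X.PosDef) (hL : 0 ≤ L) (hLX : L ≤ β • X) (hβ : β ≤ 1 / 2) :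
    X + L ≤ (∑ i ∈ range (k + 1), X⁻¹ * (-(L * X⁻¹)) ^ i)⁻¹ ∧
      (∑ i ∈ range (k + 1), X⁻¹ * (-(L * X⁻¹)) ^ i)⁻¹ ≤ X + L + (2 * β ^ k) • L := by
  have hXsp := hX.isStrictlyPositive
  set R := CFC.sqrt X
  have hRR : R * R = X := CFC.sqrt_mul_sqrt_self X
  have hR : IsSelfAdjoint R := (CFC.sqrt_nonneg X).isSelfAdjoint
  have hRdet : IsUnit R.det := (isUnit_iff_isUnit_det R).1 (IsStrictlyPositive.sqrt X).isUnit
  have hRi : IsSelfAdjoint R⁻¹ := IsHermitian.inv hR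
  have hRRi : R * R⁻¹ = 1 := mul_nonsing_inv R hRdet
  have hRiR : R⁻¹ * R = 1 := nonsing_inv_mul R hRdet
  set Y := R⁻¹ * L * R⁻¹
  have hY : 0 ≤ Y := hRi.conjugate_nonneg hL
  have hYβ : Y ≤ β • 1 :=
    calc Y ≤ R⁻¹ * (β • X) * R⁻¹ := hRi.conjugate_le_conjugate hLX
      _ = β • 1 := by
        rw [← hRR, mul_smul_comm, smul_mul_assoc, ← mul_assoc R⁻¹, hRiR, one_mul, hRRi]
  have hZ : ∑ i ∈ range (k + 1), X⁻¹ * (-(L * X⁻¹)) ^ i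
      = R⁻¹ * (∑ i ∈ range (k + 1), (-Y) ^ i) * R⁻¹ := by
    rw [mul_sum, sum_mul]
    refine sum_congr rfl fun i _ => ?_
    have hsplit : -(L * (R⁻¹ * R⁻¹)) = -(L * R⁻¹) * R⁻¹ := by rw [neg_mul, mul_assoc]
    have hnegY : -Y = R⁻¹ * -(L * R⁻¹) := by rw [mul_neg, ← mul_assoc]
    rw [← hRR, mul_inv_rev, hsplit, hnegY, mul_assoc, mul_assoc, mul_pow_mul, ← mul_assoc]
  have hZinv : (R⁻¹ * (∑ i ∈ range (k + 1), (-Y) ^ i) * R⁻¹)⁻¹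
      = R * (∑ i ∈ range (k + 1), (-Y) ^ i)⁻¹ * R := by
    rw [mul_inv_rev, mul_inv_rev, nonsing_inv_nonsing_inv R hRdet, mul_assoc]
  have hRYR : R * Y * R = L := by
    simp only [Y, ← mul_assoc, hRRi, one_mul]
    rw [mul_assoc, hRiR, mul_one]
  have hlow : X + L = R * (1 + Y) * R := by
    rw [mul_add, add_mul, mul_one, hRR, hRYR]
  have hupp : X + L + (2 * β ^ k) • L = R * (1 + Y + (2 * β ^ k) • Y) * R := by
    rw [mul_add, add_mul, ← hlow, mul_smul_comm, smul_mul_assoc, hRYR]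
  obtain ⟨h₁, h₂⟩ := one_add_le_inv_geom_sum_neg hk hY hYβ hβ
  rw [hZ, hZinv, hupp, hlow]
  exact ⟨hR.conjugate_le_conjugate h₁, hR.conjugate_le_conjugate h₂⟩

end Matrix

theorem replace_FF_block_general {F C : Type*} [Fintype F] [Fintype C] [DecidableEq F] [DecidableEq C]
    (X L : Matrix F F ℝ) (MFC : Matrix F C ℝ) (MCF : Matrix C F ℝ) (MCC : Matrix C C ℝ)
    (β : ℝ) (k : ℕ)
    (hXdiag : ∀ i j, i ≠ j → X i j = 0) (hXpos : ∀ i, 0 < X i i)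
    (hL : IsLaplacian L)
    (hM : IsSDDM (Matrix.fromBlocks (X + L) MFC MCF MCC))
    (hβ0 : 0 ≤ β) (hβ : β ≤ 1 / 2)
    (hLX : PSDLE L (β • X))
    (hk : Odd k) :
    PSDLE (Matrix.fromBlocks (X + L) MFC MCF MCC)
        (Matrix.fromBlocks (∑ i ∈ Finset.range (k + 1), X⁻¹ * (-(L * X⁻¹)) ^ i)⁻¹ MFC MCF MCC) ∧
    PSDLE (Matrix.fromBlocks (∑ i ∈ Finset.range (k + 1), X⁻¹ * (-(L * X⁻¹)) ^ i)⁻¹ MFC MCF MCC)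
        ((1 + 2 * β ^ k) • Matrix.fromBlocks (X + L) MFC MCF MCC) := by
  obtain ⟨hX, hLnonneg⟩ : X.PosDef ∧ 0 ≤ L := by
    refine ⟨?_, hL.posSemidef.nonneg⟩
    rw [show X = diagonal fun i => X i i from
      ext fun i j => by by_cases h : i = j <;> simp [diagonal, h, hXdiag]]
    exact PosDef.diagonal hXpos
  obtain ⟨hlow, hupp⟩ := add_le_inv_sum_mul_neg_mul_inv_pow hk hX hLnonneg hLX hβ
  set M := fromBlocks (X + L) MFC MCF MCC
  have hLM : fromBlocks L 0 0 0 ≤ M := by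
    refine hL.fromBlocks_zero.le_of_offDiag_le hM.1 hM.sum_row_nonneg fun i j hij => ?_
    rcases i with i | i <;> rcases j with j | j
    · simp [M, hXdiag i j fun h => hij (congrArg Sum.inl h)]
    all_goals simpa [M] using hM.2.2.1 _ _ hij
  refine ⟨fromBlocks_le_fromBlocks_left hlow _ _ _, ?_⟩
  calc _ ≤ fromBlocks (X + L + (2 * β ^ k) • L) MFC MCF MCC :=
        fromBlocks_le_fromBlocks_left hupp _ _ _
    _ = M + (2 * β ^ k) • fromBlocks L 0 0 0 := by simp [M, fromBlocks_smul, fromBlocks_add]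
    _ ≤ M + (2 * β ^ k) • M := by gcongr
    _ = (1 + 2 * β ^ k) • M := by rw [add_smul, one_smul]

/-- Let `M = [[M_FF, M_FC],[M_CF, M_CC]]` be an SDDM matrix with
`M_FF = X + L`, `X` a nonnegative diagonal matrix with positive diagonal,
`L` a Laplacian, `L ⪯ β·X`, `0 ≤ β ≤ 1/2`. For odd positive `k` and
`Z = Σ_{i=0}^{k} X⁻¹·(−L·X⁻¹)^i`, replacing the `FF` block of `M` by `Z⁻¹`
gives `M̂` with `M ⪯ M̂ ⪯ (1+2β^k)·M`. -/
theorem replace_FF_block {F C : Type*} [Fintype F] [Fintype C] [DecidableEq F] [DecidableEq C]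
    (X L : Matrix F F ℝ) (MFC : Matrix F C ℝ) (MCF : Matrix C F ℝ) (MCC : Matrix C C ℝ)
    (β : ℝ) (k : ℕ)
    (hXdiag : ∀ i j, i ≠ j → X i j = 0) (hXnn : ∀ i, 0 ≤ X i i) (hXpos : ∀ i, 0 < X i i)
    (hL : IsLaplacian L)
    (hM : IsSDDM (Matrix.fromBlocks (X + L) MFC MCF MCC))
    (hβ0 : 0 ≤ β) (hβ : β ≤ 1 / 2)
    (hLX : PSDLE L (β • X))
    (hk : Odd k) (hkpos : 0 < k) :
    PSDLE (Matrix.fromBlocks (X + L) MFC MCF MCC)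
        (Matrix.fromBlocks (∑ i ∈ Finset.range (k + 1), X⁻¹ * (-(L * X⁻¹)) ^ i)⁻¹ MFC MCF MCC) ∧
    PSDLE (Matrix.fromBlocks (∑ i ∈ Finset.range (k + 1), X⁻¹ * (-(L * X⁻¹)) ^ i)⁻¹ MFC MCF MCC)
        ((1 + 2 * β ^ k) • Matrix.fromBlocks (X + L) MFC MCF MCC) :=
  replace_FF_block_general X L MFC MCF MCC β k hXdiag hXpos hL hM hβ0 hβ hLX hk
end
end

section
/- Let M_{FF} = X_{FF} + L_{FF} be an SDDM matrix, with X_{FF} a nonnegative diagonal matrix and L_{FF} a Laplacian, that is α-strongly diagonally dominant for some α ≥ 4 (so that X_{FF} has positive diagonal entries). Define Z = ½·X_{FF}^{−1} + ½·X_{FF}^{−1}·(X_{FF} − L_{FF})·X_{FF}^{−1}·(X_{FF} − L_{FF})·X_{FF}^{−1}. Then Z is invertible and M_{FF} ⪯ Z^{−1} ⪯ M_{FF} + (2/α)·L_{FF}. -/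
/-
Let `S = X^{1/2}` and `A = S⁻¹ L S⁻¹`. Then `Z = S⁻¹ z(A) S⁻¹` with `z(t) = (1 + (1 - t)²) / 2`,
so `Z⁻¹ = S z(A)⁻¹ S`, while `X + L = S (1 + A) S` and `X + L + b L = S (1 + (1 + b) A) S`.
Strong diagonal dominance makes `(2/α) X - L` diagonally dominant, so `0 ⪯ L ⪯ b X`, i.e.
`0 ⪯ A ⪯ b` with `b = 2/α ≤ 1/2`. By the functional calculus for `A` both inequalities reduce to
the scalar bounds `1 + t ≤ 1 / z(t) ≤ 1 + (1 + b) t` for `t ∈ [0, b]`.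
-/

open Matrix BigOperators Finset
open scoped Classical

noncomputable section

lemma one_add_le_two_div_one_add_one_sub_sq {x : ℝ} (hx0 : 0 ≤ x) (hx1 : x ≤ 1) :
    1 + x ≤ 2 / (1 + (1 - x) ^ 2) := by
  rw [le_div_iff₀ (by positivity)]
  -- `(1 + x) (1 + (1 - x)²) = 2 - x² (1 - x)`
  nlinarith [mul_nonneg (mul_nonneg hx0 hx0) (sub_nonneg.2 hx1)]

lemma two_div_one_add_one_sub_sq_le {x b : ℝ} (hx0 : 0 ≤ x) (hxb : x ≤ b) (hb : b ≤ 1 / 2) :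
    2 / (1 + (1 - x) ^ 2) ≤ 1 + (1 + b) * x := by
  rw [div_le_iff₀ (by positivity)]
  -- `(1 + (1 + b) x) (1 + (1 - x)²) - 2 = 2 x (b - x) + (1 - 2 b) x² + (1 + b) x³`
  nlinarith [mul_nonneg hx0 (sub_nonneg.2 hxb), mul_nonneg (by linarith : (0 : ℝ) ≤ 1 - 2 * b)
    (sq_nonneg x), mul_nonneg (by linarith : (0 : ℝ) ≤ 1 + b) (pow_nonneg hx0 3)]

section FunctionalCalculus

open scoped Ring

variable {A : Type*} [Ring A] [StarRing A] [Algebra ℝ A] [TopologicalSpace A]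
  [ContinuousFunctionalCalculus ℝ A IsSelfAdjoint]

open Polynomial in
lemma cfc_one_add_one_sub_sq_div_two {a : A} (ha : IsSelfAdjoint a) :
    cfc (fun x : ℝ => (1 + (1 - x) ^ 2) / 2) a = (1 / 2 : ℝ) • (1 + (1 - a) * (1 - a)) := by
  have h := cfc_polynomial (C (1 / 2 : ℝ) * (1 + (1 - X) ^ 2)) a
  simp only [eval_mul, eval_C, eval_add, eval_one, eval_sub, eval_X, map_mul, aeval_C, map_add,
    map_one, map_sub, aeval_X, Algebra.algebraMap_eq_smul_one, smul_mul_assoc, one_mul, sq] at h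
  rw [← h]
  congr 1
  funext x
  ring

lemma isUnit_half_one_add_one_sub_sq {a : A} (ha : IsSelfAdjoint a) :
    IsUnit ((1 / 2 : ℝ) • (1 + (1 - a) * (1 - a))) := by
  rw [← cfc_one_add_one_sub_sq_div_two ha]
  exact (isUnit_cfc_iff _ a).2 fun x _ => by positivity

lemma ringInverse_half_one_add_one_sub_sq {a : A} (ha : IsSelfAdjoint a) :
    ((1 / 2 : ℝ) • (1 + (1 - a) * (1 - a)))⁻¹ʳ =
      cfc (fun x : ℝ => 2 / (1 + (1 - x) ^ 2)) a := by
  rw [← cfc_one_add_one_sub_sq_div_two ha, ← cfc_inv _ a fun x _ => by positivity]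
  congr 1
  funext x
  rw [inv_div]

variable [PartialOrder A] [StarOrderedRing A] [NonnegSpectrumClass ℝ A]

lemma one_add_le_ringInverse_half_one_add_one_sub_sq {a : A} {b : ℝ} (ha0 : 0 ≤ a)
    (hab : a ≤ algebraMap ℝ A b) (hb : b ≤ 1) :
    1 + a ≤ ((1 / 2 : ℝ) • (1 + (1 - a) * (1 - a)))⁻¹ʳ := by
  have ha : IsSelfAdjoint a := .of_nonneg ha0
  have hlin : 1 + a = cfc (fun x : ℝ => 1 + x) a := by
    rw [cfc_const_add 1 (fun x => x) a, cfc_id' ℝ a, map_one]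
  rw [ringInverse_half_one_add_one_sub_sq ha, hlin]
  exact cfc_mono (hg := by fun_prop (disch := intros; positivity)) fun x hx =>
    one_add_le_two_div_one_add_one_sub_sq (spectrum_nonneg_of_nonneg ha0 hx)
      (((le_algebraMap_iff_spectrum_le ha).1 hab x hx).trans hb)

lemma ringInverse_half_one_add_one_sub_sq_le {a : A} {b : ℝ} (ha0 : 0 ≤ a)
    (hab : a ≤ algebraMap ℝ A b) (hb : b ≤ 1 / 2) :
    ((1 / 2 : ℝ) • (1 + (1 - a) * (1 - a)))⁻¹ʳ ≤ 1 + (1 + b) • a := by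
  have ha : IsSelfAdjoint a := .of_nonneg ha0
  have hlin : 1 + (1 + b) • a = cfc (fun x : ℝ => 1 + (1 + b) * x) a := by
    rw [cfc_const_add 1 (fun x => (1 + b) * x) a, cfc_const_mul_id (1 + b) a, map_one]
  rw [ringInverse_half_one_add_one_sub_sq ha, hlin]
  exact cfc_mono (hf := by fun_prop (disch := intros; positivity)) fun x hx =>
    two_div_one_add_one_sub_sq_le (spectrum_nonneg_of_nonneg ha0 hx)
      ((le_algebraMap_iff_spectrum_le ha).1 hab x hx) hb

end FunctionalCalculus

section Matrices

variable {n : Type*} [Fintype n] [DecidableEq n]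

lemma Matrix.PosSemidef.of_isSymm_of_sum_abs_le_diag {B : Matrix n n ℝ} (hB : B.IsSymm)
    (hdom : ∀ i, ∑ j ∈ univ.erase i, |B i j| ≤ B i i) : B.PosSemidef := by
  have hH : B.IsHermitian := by rwa [Matrix.IsHermitian, conjTranspose_eq_transpose_of_trivial]
  refine hH.posSemidef_iff_eigenvalues_nonneg.2 fun i => ?_
  have hμ : Module.End.HasEigenvalue (toLin' B) (hH.eigenvalues i) :=
    Module.End.hasEigenvalue_iff_mem_spectrum.2 <| by
      rw [spectrum_toLin']; exact hH.eigenvalues_mem_spectrum_real i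
  obtain ⟨k, hk⟩ := eigenvalue_mem_ball hμ
  rw [Metric.mem_closedBall, Real.dist_eq] at hk
  simp only [Real.norm_eq_abs] at hk
  show 0 ≤ hH.eigenvalues i
  linarith [neg_abs_le (hH.eigenvalues i - B k k), hdom k]

lemma IsLaplacian.diag_eq_sum_abs {L : Matrix n n ℝ} (hL : IsLaplacian L) (i : n) :
    L i i = ∑ j ∈ univ.erase i, |L i j| := by
  have hrow := hL.2.2 i
  rw [← sum_erase_add _ _ (mem_univ i)] at hrow
  rw [sum_congr rfl fun j hj => abs_of_nonpos (hL.2.1 i j (ne_of_mem_erase hj).symm),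
    sum_neg_distrib]
  linarith

lemma IsLaplacian.posSemidef_s13 {L : Matrix n n ℝ} (hL : IsLaplacian L) : L.PosSemidef :=
  .of_isSymm_of_sum_abs_le_diag hL.1 fun i => (hL.diag_eq_sum_abs i).ge

lemma IsLaplacian.posSemidef_diagonal_sub {L : Matrix n n ℝ} (hL : IsLaplacian L) {d : n → ℝ}
    (hd : ∀ i, 2 * L i i ≤ d i) : (diagonal d - L).PosSemidef := by
  refine .of_isSymm_of_sum_abs_le_diag ?_ fun i => ?_
  · rw [IsSymm, transpose_sub, diagonal_transpose, hL.1.eq]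
  · have hoff : ∑ j ∈ univ.erase i, |(diagonal d - L) i j| = L i i := by
      rw [hL.diag_eq_sum_abs i]
      refine sum_congr rfl fun j hj => ?_
      rw [Matrix.sub_apply, diagonal_apply_ne _ (ne_of_mem_erase hj).symm, zero_sub, abs_neg]
    rw [hoff, Matrix.sub_apply, diagonal_apply_eq]
    linarith [hd i]

lemma IsStronglyDD.mul_diag_le_of_isLaplacian {α : ℝ} {X L : Matrix n n ℝ}
    (hXdiag : X.IsDiag) (hL : IsLaplacian L) (hsdd : IsStronglyDD α (X + L)) (i : n) :
    α * L i i ≤ X i i := by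
  have h := hsdd i
  have hoff : ∑ j ∈ univ.erase i, |(X + L) i j| = L i i := by
    rw [hL.diag_eq_sum_abs i]
    refine sum_congr rfl fun j hj => ?_
    rw [Matrix.add_apply, hXdiag (ne_of_mem_erase hj).symm, zero_add]
  rw [hoff, Matrix.add_apply] at h
  linarith

-- The matrix `Z` of the theorem: an approximate inverse of `X + L`.
def lastStepApproxInv (X L : Matrix n n ℝ) : Matrix n n ℝ :=
  (1 / 2 : ℝ) • X⁻¹ + (1 / 2 : ℝ) • (X⁻¹ * (X - L) * X⁻¹ * (X - L) * X⁻¹)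

lemma lastStepApproxInv_mul_self_conj {S A : Matrix n n ℝ} (hS : IsUnit S) :
    lastStepApproxInv (S * S) (S * A * S) =
      S⁻¹ * ((1 / 2 : ℝ) • (1 + (1 - A) * (1 - A))) * S⁻¹ := by
  have hdet := (isUnit_iff_isUnit_det S).1 hS
  have hcancel : ∀ M, S⁻¹ * (S * M) = M := fun M => by
    rw [← Matrix.mul_assoc, nonsing_inv_mul _ hdet, Matrix.one_mul]
  have hcancel' : ∀ M, S * (S⁻¹ * M) = M := fun M => by
    rw [← Matrix.mul_assoc, mul_nonsing_inv _ hdet, Matrix.one_mul]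
  have hsub : S * S - S * A * S = S * ((1 - A) * S) := by noncomm_ring
  rw [lastStepApproxInv, Matrix.mul_inv_rev, hsub]
  simp only [Matrix.mul_assoc, hcancel, hcancel', Matrix.mul_add, Matrix.add_mul, Matrix.mul_smul,
    Matrix.smul_mul, Matrix.mul_one, smul_add]

open scoped MatrixOrder Ring in
lemma lastStepApproxInv_bounds {X L : Matrix n n ℝ} {b : ℝ} (hX : X.PosDef) (hL : 0 ≤ L)
    (hLX : L ≤ b • X) (hb : b ≤ 1 / 2) :
    IsUnit (lastStepApproxInv X L) ∧ X + L ≤ (lastStepApproxInv X L)⁻¹ ∧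
      (lastStepApproxInv X L)⁻¹ ≤ X + L + b • L := by
  set S := CFC.sqrt X
  have hSsa : IsSelfAdjoint S := .of_nonneg (CFC.sqrt_nonneg X)
  have hS : IsUnit S := (CFC.isUnit_sqrt_iff X).2 hX.isUnit
  have hdet := (isUnit_iff_isUnit_det S).1 hS
  have hSS : S * S = X := CFC.sqrt_mul_sqrt_self X
  have hSinv : IsSelfAdjoint S⁻¹ := by
    rw [IsSelfAdjoint, star_eq_conjTranspose, conjTranspose_nonsing_inv, ← star_eq_conjTranspose,
      hSsa.star_eq]
  set A := S⁻¹ * L * S⁻¹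
  have hLA : L = S * A * S := by
    simp only [A, ← Matrix.mul_assoc, mul_nonsing_inv _ hdet, Matrix.one_mul]
    rw [Matrix.mul_assoc, nonsing_inv_mul _ hdet, Matrix.mul_one]
  have hA0 : 0 ≤ A := by simpa using hSinv.conjugate_le_conjugate hL
  have hAb : A ≤ algebraMap ℝ _ b := by
    have h := hSinv.conjugate_le_conjugate hLX
    rwa [← hSS, Matrix.mul_smul, Matrix.smul_mul, ← Matrix.mul_assoc, nonsing_inv_mul _ hdet,
      Matrix.one_mul, mul_nonsing_inv _ hdet, ← Algebra.algebraMap_eq_smul_one] at h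
  have hz := isUnit_half_one_add_one_sub_sq hA0.isSelfAdjoint
  have hinv : (S⁻¹ * ((1 / 2 : ℝ) • (1 + (1 - A) * (1 - A))) * S⁻¹)⁻¹ =
      S * ((1 / 2 : ℝ) • (1 + (1 - A) * (1 - A)))⁻¹ʳ * S := by
    rw [Matrix.mul_inv_rev, Matrix.mul_inv_rev, nonsing_inv_nonsing_inv _ hdet,
      nonsing_inv_eq_ringInverse, Matrix.mul_assoc]
  rw [← hSS, hLA, lastStepApproxInv_mul_self_conj hS, hinv]
  refine ⟨((isUnit_nonsing_inv_iff.2 hS).mul hz).mul (isUnit_nonsing_inv_iff.2 hS), ?_, ?_⟩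
  · convert hSsa.conjugate_le_conjugate
      (one_add_le_ringInverse_half_one_add_one_sub_sq hA0 hAb (by linarith)) using 1
    noncomm_ring
  · convert hSsa.conjugate_le_conjugate
      (ringInverse_half_one_add_one_sub_sq_le hA0 hAb hb) using 1
    simp only [Matrix.mul_add, Matrix.add_mul, Matrix.mul_smul, Matrix.smul_mul, Matrix.mul_one,
      add_smul, one_smul]
    abel

end Matrices

open scoped MatrixOrder in
theorem last_step_operator_general {n : Type*} [Fintype n] [DecidableEq n]
    (X L : Matrix n n ℝ) (α : ℝ) (hα : 4 ≤ α)
    (hXdiag : ∀ i j, i ≠ j → X i j = 0)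
    (hL : IsLaplacian L)
    (hM : IsSDDM (X + L)) (hsdd : IsStronglyDD α (X + L)) :
    IsUnit ((1 / 2 : ℝ) • X⁻¹ +
        (1 / 2 : ℝ) • (X⁻¹ * (X - L) * X⁻¹ * (X - L) * X⁻¹)) ∧
    PSDLE (X + L)
      ((1 / 2 : ℝ) • X⁻¹ + (1 / 2 : ℝ) • (X⁻¹ * (X - L) * X⁻¹ * (X - L) * X⁻¹))⁻¹ ∧
    PSDLE ((1 / 2 : ℝ) • X⁻¹ + (1 / 2 : ℝ) • (X⁻¹ * (X - L) * X⁻¹ * (X - L) * X⁻¹))⁻¹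
      ((X + L) + (2 / α) • L) := by
  have hα0 : 0 < α := by linarith
  have hXL := hsdd.mul_diag_le_of_isLaplacian hXdiag hL
  have hLnn : ∀ i, 0 ≤ L i i := fun i => hL.posSemidef_s13.diag_nonneg
  have hXpos : ∀ i, 0 < X i i := fun i => by
    have h : 0 < X i i + L i i := hM.2.1.diag_pos
    nlinarith [hXL i, hLnn i]
  have hX : diagonal X.diag = X := (isDiag_iff_diagonal_diag X).1 hXdiag
  have hLX : L ≤ (2 / α) • X := by
    rw [← hX, ← diagonal_smul, le_iff]
    refine hL.posSemidef_diagonal_sub fun i => ?_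
    rw [Pi.smul_apply, diag_apply, smul_eq_mul, div_mul_eq_mul_div, le_div_iff₀ hα0]
    nlinarith [hXL i]
  exact lastStepApproxInv_bounds (hX ▸ PosDef.diagonal hXpos) hL.posSemidef_s13.nonneg hLX
    (by rw [div_le_iff₀ hα0]; linarith)

/-- Let `M = X + L` be an SDDM matrix (`X` nonnegative diagonal,
`L` Laplacian) that is α-strongly diagonally dominant for some `α ≥ 4`.  With
`Z = ½·X⁻¹ + ½·X⁻¹·(X − L)·X⁻¹·(X − L)·X⁻¹`, `Z` is invertible and
`M ⪯ Z⁻¹ ⪯ M + (2/α)·L`. -/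
theorem last_step_operator {n : Type*} [Fintype n] [DecidableEq n]
    (X L : Matrix n n ℝ) (α : ℝ) (hα : 4 ≤ α)
    (hXdiag : ∀ i j, i ≠ j → X i j = 0) (hXnn : ∀ i, 0 ≤ X i i)
    (hL : IsLaplacian L)
    (hM : IsSDDM (X + L)) (hsdd : IsStronglyDD α (X + L)) :
    IsUnit ((1 / 2 : ℝ) • X⁻¹ +
        (1 / 2 : ℝ) • (X⁻¹ * (X - L) * X⁻¹ * (X - L) * X⁻¹)) ∧
    PSDLE (X + L)
      ((1 / 2 : ℝ) • X⁻¹ + (1 / 2 : ℝ) • (X⁻¹ * (X - L) * X⁻¹ * (X - L) * X⁻¹))⁻¹ ∧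
    PSDLE ((1 / 2 : ℝ) • X⁻¹ + (1 / 2 : ℝ) • (X⁻¹ * (X - L) * X⁻¹ * (X - L) * X⁻¹))⁻¹
      ((X + L) + (2 / α) • L) :=
  last_step_operator_general X L α hα hXdiag hL hM hsdd
end
end
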